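/- arXiv:0709.1596 — 4 statements merged into one kernel-verified Lean document; each statement's English description precedes it below -/
import Mathlib

section
/- Let d > 0, T_r > 0, k a positive integer, T_h = k·T_r, α_y ∈ (0,1] and μ ≥ 0. Let y* = μ T_r·( ((1-e^{-d T_h})/(1-e^{-d T_r}))·(1-α_y) + α_y ) / (1-(1-α_y)·e^{-d T_h}) and y_ph(t) = y*·e^{-d·(t mod T_h)} + μ T_r·e^{-d·(t mod T_r)}·Σ_{j=0}^{⌊(t mod T_h)/T_r⌋ - 1} e^{-j d T_r}, where (t mod P) denotes the representative of t modulo P in [0,P). Then ∫_0^{T_h} y_ph(t) dt = (μ T_h/d)·( 1 - ( α_y·(1-e^{-d T_h}) / (1-(1-α_y)·e^{-d T_h}) )·( e^{-d T_h/k} / (k·(1-e^{-d T_h/k})) ) ). -/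
/-!
On the `i`-th release interval `[i T_r, (i+1) T_r)` of the first harvest period the solution is
`K_i e^{-d (t - i T_r)}` with `K_i = y* E^i + μ T_r ∑_{j<i} E^j` and `E = e^{-d T_r}`, so that piece
contributes `K_i (1 - E) / d`. Since `(1 - E) ∑_{j<i} E^j = 1 - E^i`, the sum telescopes to
`(1 - E) ∑_i K_i = y* (1 - E^k) + μ T_r (k - ∑_{i<k} E^i)`, and substituting `y*` gives the closed form.
-/

/-- The representative of `t` modulo `P` lying in `[0, P)` (for `P > 0`). -/
noncomputable def rmod (P t : ℝ) : ℝ := t - P * (⌊t / P⌋ : ℝ)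

open MeasureTheory Set Finset Real

lemma integral_exp_neg_mul (d a b : ℝ) (hd : d ≠ 0) :
    ∫ t in a..b, exp (-d * t) = (exp (-d * a) - exp (-d * b)) / d := by
  rw [intervalIntegral.integral_comp_mul_left (fun t => exp t) (neg_ne_zero.mpr hd),
    integral_exp, smul_eq_mul]
  field_simp
  ring

theorem integral_eq_sum_of_eqOn_Ioo_mul_exp {f : ℝ → ℝ} {d T : ℝ} {k : ℕ} (c : ℕ → ℝ)
    (hd : d ≠ 0) (hT : 0 ≤ T)
    (hf : ∀ i < k, EqOn f (fun t => c i * exp (-d * (t - i * T))) (Ioo (i * T) ((i + 1) * T))) :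
    ∫ t in (0 : ℝ)..k * T, f t = (1 - exp (-d * T)) / d * ∑ i ∈ range k, c i := by
  have hle : ∀ i : ℕ, (i : ℝ) * T ≤ (i + 1) * T := fun i => by nlinarith
  have hpiece : ∀ i < k, ∫ t in (i : ℝ) * T..(i + 1) * T, f t = (1 - exp (-d * T)) / d * c i := by
    intro i hi
    rw [intervalIntegral.integral_congr_Ioo_of_le (hle i) (hf i hi),
      intervalIntegral.integral_const_mul, intervalIntegral.integral_comp_sub_right
        (fun u => exp (-d * u)), integral_exp_neg_mul _ _ _ hd,
      sub_self, add_mul, one_mul, add_sub_cancel_left, mul_zero, exp_zero]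
    ring
  have hint : ∀ i < k, IntervalIntegrable f volume ((i : ℝ) * T) (((i + 1 : ℕ) : ℝ) * T) := by
    intro i hi
    push_cast
    refine ((show Continuous fun t => c i * exp (-d * (t - i * T)) by fun_prop).intervalIntegrable
      _ _).congr_uIoo ?_
    exact (uIoo_of_le (hle i) ▸ hf i hi).symm
  have hsum := intervalIntegral.sum_integral_adjacent_intervals hint
  push_cast at hsum
  rw [zero_mul] at hsum
  rw [← hsum, mul_sum]
  exact sum_congr rfl fun i hi => hpiece i (mem_range.mp hi)

lemma floor_div_eq_of_mem_Ico {P t : ℝ} {n : ℤ} (hP : 0 < P)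
    (ht : t ∈ Ico (n * P) ((n + 1) * P)) :
    ⌊t / P⌋ = n := by
  rw [Int.floor_eq_iff, le_div_iff₀ hP, div_lt_iff₀ hP]
  exact ht

lemma rmod_eq_sub_of_mem_Ico {P t : ℝ} {n : ℤ} (hP : 0 < P)
    (ht : t ∈ Ico (n * P) ((n + 1) * P)) :
    rmod P t = t - n * P := by
  rw [rmod, floor_div_eq_of_mem_Ico hP ht, mul_comm]

lemma rmod_eq_self_of_mem_Ico {P t : ℝ} (hP : 0 < P) (ht : t ∈ Ico 0 P) : rmod P t = t := by
  simpa using rmod_eq_sub_of_mem_Ico (n := 0) hP (by simpa using ht)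

/-- The function `y_ph` of the statement: `y*` decaying since the last harvest, plus the releases
since then, each decaying since its own release. -/
noncomputable def harvestPredator (d Tr Th μ ystar t : ℝ) : ℝ :=
  ystar * exp (-d * rmod Th t)
    + μ * Tr * exp (-d * rmod Tr t)
      * ∑ j ∈ range ⌊rmod Th t / Tr⌋.toNat, exp (-(j : ℝ) * d * Tr)

lemma harvestPredator_eqOn_Ico {d Tr μ ystar : ℝ} {k i : ℕ} (hTr : 0 < Tr) (hi : i < k) :
    EqOn (harvestPredator d Tr (k * Tr) μ ystar)
      (fun t => (ystar * exp (-d * Tr) ^ i + μ * Tr * ∑ j ∈ range i, exp (-d * Tr) ^ j)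
        * exp (-d * (t - i * Tr)))
      (Ico (i * Tr) ((i + 1) * Tr)) := by
  intro t ht
  have ht' : t ∈ Ico ((i : ℤ) * Tr) (((i : ℤ) + 1) * Tr) := by exact_mod_cast ht
  have htk : t ∈ Ico 0 (k * Tr) := by
    have : ((i : ℝ) + 1) ≤ k := by exact_mod_cast hi
    exact ⟨le_trans (by positivity) ht.1, ht.2.trans_le (by nlinarith)⟩
  have hpow : ∀ n : ℕ, exp (-d * Tr) ^ n = exp (-(n : ℝ) * d * Tr) := fun n => by
    rw [← exp_nat_mul]
    ring_nf
  have hshift : exp (-d * t) = exp (-d * Tr) ^ i * exp (-d * (t - i * Tr)) := by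
    rw [hpow, ← exp_add]
    ring_nf
  rw [harvestPredator, rmod_eq_self_of_mem_Ico (htk.1.trans_lt htk.2) htk,
    rmod_eq_sub_of_mem_Ico hTr ht', floor_div_eq_of_mem_Ico hTr ht', Int.toNat_natCast,
    Int.cast_natCast, hshift]
  simp only [hpow]
  ring

lemma one_sub_mul_sum_geom {R : Type*} [CommRing R] (x y m : R) (k : ℕ) :
    (1 - x) * ∑ i ∈ range k, (y * x ^ i + m * ∑ j ∈ range i, x ^ j)
      = y * (1 - x ^ k) + m * (k - ∑ i ∈ range k, x ^ i) := by
  have hterm : ∀ i, (1 - x) * (y * x ^ i + m * ∑ j ∈ range i, x ^ j)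
      = y * (x ^ i - x ^ (i + 1)) + m * (1 - x ^ i) := fun i => by
    rw [← geom_sum_mul_neg]
    ring
  rw [mul_sum, sum_congr rfl fun i _ => hterm i, sum_add_distrib, ← mul_sum, ← mul_sum,
    sum_range_sub', sum_sub_distrib, pow_zero]
  simp

theorem stmt_5_general (d Tr Th αy μ : ℝ) (k : ℕ) (hk : 0 < k) (hd : 0 < d) (hTr : 0 < Tr)
    (hTh : Th = (k : ℝ) * Tr) (hαy : αy ∈ Set.Ioc (0 : ℝ) 1)
    (ystar : ℝ)
    (hystar : ystar = μ * Tr * ((1 - Real.exp (-d * Th)) / (1 - Real.exp (-d * Tr)) * (1 - αy)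
      + αy) / (1 - (1 - αy) * Real.exp (-d * Th)))
    (yph : ℝ → ℝ)
    (hyph : ∀ t : ℝ, yph t = ystar * Real.exp (-d * rmod Th t)
      + μ * Tr * Real.exp (-d * rmod Tr t)
        * ∑ j ∈ Finset.range (⌊rmod Th t / Tr⌋.toNat), Real.exp (-(j : ℝ) * d * Tr)) :
    ∫ t in (0 : ℝ)..Th, yph t
      = μ * Th / d * (1 - αy * (1 - Real.exp (-d * Th)) / (1 - (1 - αy) * Real.exp (-d * Th))
        * (Real.exp (-d * Th / k) / ((k : ℝ) * (1 - Real.exp (-d * Th / k))))) := by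
  subst hTh
  set E := exp (-d * Tr) with hE
  have hE_lt : E < 1 := exp_lt_one_iff.mpr (by nlinarith)
  have hEk : exp (-d * (k * Tr)) = E ^ k := by
    rw [← exp_nat_mul]
    ring_nf
  have hEk' : exp (-d * (k * Tr) / k) = E := by
    congr 1
    field_simp
  have hpieces : ∀ i < k, EqOn yph
      (fun t => (ystar * E ^ i + μ * Tr * ∑ j ∈ range i, E ^ j) * exp (-d * (t - i * Tr)))
      (Ioo (i * Tr) ((i + 1) * Tr)) := fun i hi t ht =>
    (hyph t).trans (harvestPredator_eqOn_Ico hTr hi (Ioo_subset_Ico_self ht))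
  rw [integral_eq_sum_of_eqOn_Ioo_mul_exp _ hd.ne' hTr.le hpieces, div_mul_eq_mul_div,
    one_sub_mul_sum_geom, ← hE, geom_sum_eq hE_lt.ne, hystar, hEk, hEk']
  have hden : 1 - E ^ k * (1 - αy) ≠ 0 := by
    nlinarith [mul_pos hαy.1 (pow_pos (exp_pos (-d * Tr)) k),
      pow_lt_one₀ (exp_pos _).le hE_lt hk.ne']
  have hE_ne : E - 1 ≠ 0 := sub_ne_zero.mpr hE_lt.ne
  have hE_ne' : 1 - E ≠ 0 := sub_ne_zero.mpr hE_lt.ne'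
  field_simp
  ring

/-- The integral over one harvest period of the pest-free periodic predator
solution, when releases are more frequent than harvests (`T_h = k·T_r`). -/
theorem stmt_5 (d Tr Th αy μ : ℝ) (k : ℕ) (hk : 0 < k) (hd : 0 < d) (hTr : 0 < Tr)
    (hTh : Th = (k : ℝ) * Tr) (hαy : αy ∈ Set.Ioc (0 : ℝ) 1) (hμ : 0 ≤ μ)
    (ystar : ℝ)
    (hystar : ystar = μ * Tr * ((1 - Real.exp (-d * Th)) / (1 - Real.exp (-d * Tr)) * (1 - αy)
      + αy) / (1 - (1 - αy) * Real.exp (-d * Th)))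
    (yph : ℝ → ℝ)
    (hyph : ∀ t : ℝ, yph t = ystar * Real.exp (-d * rmod Th t)
      + μ * Tr * Real.exp (-d * rmod Tr t)
        * ∑ j ∈ Finset.range (⌊rmod Th t / Tr⌋.toNat), Real.exp (-(j : ℝ) * d * Tr)) :
    ∫ t in (0 : ℝ)..Th, yph t
      = μ * Th / d * (1 - αy * (1 - Real.exp (-d * Th)) / (1 - (1 - αy) * Real.exp (-d * Th))
        * (Real.exp (-d * Th / k) / ((k : ℝ) * (1 - Real.exp (-d * Th / k))))) :=
  stmt_5_general d Tr Th αy μ k hk hd hTr hTh hαy ystar hystar yph hyph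
end

section
/- Let d > 0, T_h > 0, k a positive integer, T_r = k·T_h, α_y ∈ [0,1] and μ ≥ 0. Let y* = μ T_r / (1-(1-α_y)^k·e^{-d T_r}) and y_pr(t) = y*·e^{-d·(t mod T_r)}·(1-α_y)^{⌊(t mod T_r)/T_h⌋}, where (t mod P) denotes the representative of t modulo P in [0,P). Then ∫_0^{T_r} y_pr(t) dt = (μ T_r/d)·(1-e^{-d T_h})/(1-(1-α_y)·e^{-d T_h}). -/
/-!
On the `i`-th harvest interval `[i T_h, (i+1) T_h)` of the first release period the solution is
`y* (1 - α_y)^i e^{-d t}`, whose integral there is `y* (1 - e^{-d T_h}) / d · r^i` with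
`r = (1 - α_y) e^{-d T_h} < 1`. Summing the geometric series over `i < k` gives
`y* (1 - e^{-d T_h}) / d · (1 - r^k) / (1 - r)`, and `r^k = (1 - α_y)^k e^{-d T_r}` makes
`y* (1 - r^k) = μ T_r`.
-/

open Real Set Finset MeasureTheory

theorem integral_exp_mul {a b c : ℝ} (hc : c ≠ 0) :
    ∫ x in a..b, exp (c * x) = (exp (c * b) - exp (c * a)) / c := by
  rw [intervalIntegral.integral_comp_mul_left (fun x => exp x) hc, integral_exp, smul_eq_mul,
    inv_mul_eq_div]

theorem intervalIntegral_eq_sum_of_eqOn_uIoo {E : Type*} [NormedAddCommGroup E]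
    [NormedSpace ℝ E] {f : ℝ → E} {g : ℕ → ℝ → E} {a : ℕ → ℝ} {n : ℕ}
    (hg : ∀ i < n, Continuous (g i)) (hfg : ∀ i < n, EqOn f (g i) (uIoo (a i) (a (i + 1)))) :
    ∫ x in a 0..a n, f x = ∑ i ∈ range n, ∫ x in a i..a (i + 1), g i x := by
  rw [← intervalIntegral.sum_integral_adjacent_intervals fun i hi =>
    ((hg i hi).intervalIntegrable _ _).congr_uIoo fun x hx => (hfg i hi hx).symm]
  exact Finset.sum_congr rfl fun i hi =>
    intervalIntegral.integral_congr_uIoo (hfg i (Finset.mem_range.mp hi))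

theorem rmod_eq_self {P t : ℝ} (h0 : 0 ≤ t) (hP : t < P) : rmod P t = t := by
  have : ⌊t / P⌋ = 0 := Int.floor_eq_zero_iff.mpr
    ⟨div_nonneg h0 (h0.trans hP.le), (div_lt_one (h0.trans_lt hP)).mpr hP⟩
  simp [rmod, this]

theorem floor_div_eq_of_mem_Ico_s6 {T t : ℝ} {i : ℕ} (hT : 0 < T)
    (ht : t ∈ Ico (i * T) ((i + 1) * T)) : ⌊t / T⌋ = i := by
  rw [Int.floor_eq_iff, le_div_iff₀ hT, div_lt_iff₀ hT]
  exact_mod_cast ht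

theorem exp_rmod_mul_pow_floor_eq {P T d q t : ℝ} {i : ℕ} (hT : 0 < T) (hP : (i + 1) * T ≤ P)
    (ht : t ∈ Ico (i * T) ((i + 1) * T)) :
    exp (-d * rmod P t) * q ^ ⌊rmod P t / T⌋.toNat = q ^ i * exp (-d * t) := by
  rw [rmod_eq_self ((mul_nonneg i.cast_nonneg hT.le).trans ht.1) (ht.2.trans_le hP),
    floor_div_eq_of_mem_Ico_s6 hT ht, Int.toNat_natCast, mul_comm]

theorem integral_const_mul_exp_harvest_interval {c q d T : ℝ} (i : ℕ) (hd : d ≠ 0) :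
    ∫ x in i * T..(i + 1) * T, c * q ^ i * exp (-d * x)
      = c * (1 - exp (-d * T)) / d * (q * exp (-d * T)) ^ i := by
  have hleft : exp (-d * (i * T)) = exp (-d * T) ^ i := by rw [← exp_nat_mul]; ring_nf
  have hright : exp (-d * ((i + 1) * T)) = exp (-d * T) ^ i * exp (-d * T) := by
    rw [← exp_nat_mul, ← exp_add]; ring_nf
  rw [intervalIntegral.integral_const_mul, integral_exp_mul (neg_ne_zero.mpr hd), hleft, hright]
  field_simp
  ring

theorem stmt_6_general (d Th Tr αy μ : ℝ) (k : ℕ) (hk : 0 < k) (hd : 0 < d) (hTh : 0 < Th)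
    (hTr : Tr = (k : ℝ) * Th) (hαy : αy ∈ Set.Icc (0 : ℝ) 1)
    (ystar : ℝ)
    (hystar : ystar = μ * Tr / (1 - (1 - αy) ^ k * Real.exp (-d * Tr)))
    (ypr : ℝ → ℝ)
    (hypr : ∀ t : ℝ, ypr t = ystar * Real.exp (-d * rmod Tr t)
      * (1 - αy) ^ (⌊rmod Tr t / Th⌋.toNat)) :
    ∫ t in (0 : ℝ)..Tr, ypr t
      = μ * Tr / d * (1 - Real.exp (-d * Th)) / (1 - (1 - αy) * Real.exp (-d * Th)) := by
  set E := exp (-d * Th) with hE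
  set r := (1 - αy) * E with hr
  have hr_nonneg : 0 ≤ r := mul_nonneg (sub_nonneg.mpr hαy.2) (exp_pos _).le
  have hr_lt_one : r < 1 := calc
    r ≤ E := mul_le_of_le_one_left (exp_pos _).le (sub_le_self _ hαy.1)
    _ < 1 := exp_lt_one_iff.mpr (by nlinarith)
  have hrk : r ^ k = (1 - αy) ^ k * exp (-d * Tr) := by
    rw [hr, mul_pow, ← exp_nat_mul, hTr]; ring_nf
  have hystar_mul : ystar * (1 - r ^ k) = μ * Tr := by
    rw [hystar, ← hrk, div_mul_cancel₀ _ (sub_pos.mpr (pow_lt_one₀ hr_nonneg hr_lt_one hk.ne')).ne']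
  have hypr_piece : ∀ i < k, EqOn ypr (fun t => ystar * (1 - αy) ^ i * exp (-d * t))
      (uIoo (i * Th) ((i + 1 : ℕ) * Th)) := by
    intro i hi t ht
    have hle : ((i + 1 : ℕ) : ℝ) * Th ≤ Tr := by rw [hTr]; gcongr; exact_mod_cast hi
    rw [uIoo_of_le (by gcongr; simp)] at ht
    push_cast at ht hle
    rw [hypr, mul_assoc, exp_rmod_mul_pow_floor_eq hTh hle (Ioo_subset_Ico_self ht)]
    exact (mul_assoc _ _ _).symm
  have hintegral := intervalIntegral_eq_sum_of_eqOn_uIoo (a := fun i : ℕ => i * Th)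
    (fun i _ => by fun_prop) hypr_piece
  simp only [Nat.cast_zero, zero_mul, ← hTr, Nat.cast_succ,
    integral_const_mul_exp_harvest_interval _ hd.ne', ← hE, ← hr] at hintegral
  rw [hintegral, ← mul_sum, geom_sum_eq hr_lt_one.ne, ← neg_div_neg_eq (r ^ k - 1), neg_sub, neg_sub,
    ← hystar_mul]
  ring

/-- The integral over one release period of the pest-free periodic predator
solution, when harvests are more frequent than releases (`T_r = k·T_h`). -/
theorem stmt_6 (d Th Tr αy μ : ℝ) (k : ℕ) (hk : 0 < k) (hd : 0 < d) (hTh : 0 < Th)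
    (hTr : Tr = (k : ℝ) * Th) (hαy : αy ∈ Set.Icc (0 : ℝ) 1) (hμ : 0 ≤ μ)
    (ystar : ℝ)
    (hystar : ystar = μ * Tr / (1 - (1 - αy) ^ k * Real.exp (-d * Tr)))
    (ypr : ℝ → ℝ)
    (hypr : ∀ t : ℝ, ypr t = ystar * Real.exp (-d * rmod Tr t)
      * (1 - αy) ^ (⌊rmod Tr t / Th⌋.toNat)) :
    ∫ t in (0 : ℝ)..Tr, ypr t
      = μ * Tr / d * (1 - Real.exp (-d * Th)) / (1 - (1 - αy) * Real.exp (-d * Th)) :=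
  stmt_6_general d Th Tr αy μ k hk hd hTh hTr hαy ystar hystar ypr hypr
end

section
/- Let d > 0, T_h > 0, α_y ∈ (0,1] and let k be a positive integer. Then ( α_y·(1-e^{-d T_h}) / (1-(1-α_y)·e^{-d T_h}) )·( e^{-d T_h/k} / (k·(1-e^{-d T_h/k})) ) < 1. -/
/-!
Put `u = exp (-d Th / k) ∈ (0, 1)`, so that `exp (-d Th) = u ^ k`. Bernoulli's inequality
`1 - u ^ k ≤ k (1 - u)` bounds the product by `α u / (1 - (1 - α) u ^ k)`, and this is `< 1`
because `u ^ k ≤ u` gives `1 - (1 - α) u ^ k ≥ 1 - u + α u > α u`.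
-/

theorem mul_one_sub_pow_div_mul_div_lt_one {K : Type*} [Field K] [LinearOrder K]
    [IsStrictOrderedRing K] {u α : K} {k : ℕ} (hk : k ≠ 0) (hu₀ : 0 ≤ u) (hu₁ : u < 1)
    (hα₀ : 0 ≤ α) (hα₁ : α ≤ 1) :
    α * (1 - u ^ k) / (1 - (1 - α) * u ^ k) * (u / (k * (1 - u))) < 1 := by
  have hpow : u ^ k ≤ u := pow_le_of_le_one hu₀ hu₁.le hk
  have hbernoulli : 1 - u ^ k ≤ k * (1 - u) := by
    linarith [one_add_mul_sub_le_pow (by linarith : (-1 : K) ≤ u) k]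
  have hαu : α * u < 1 - (1 - α) * u ^ k := by nlinarith
  have hscale : 0 < (k : K) * (1 - u) :=
    mul_pos (Nat.cast_pos.mpr (Nat.pos_of_ne_zero hk)) (sub_pos.mpr hu₁)
  rw [div_mul_div_comm, div_lt_one (mul_pos (by nlinarith) hscale)]
  calc α * (1 - u ^ k) * u ≤ α * (k * (1 - u)) * u := by gcongr
    _ = α * u * (k * (1 - u)) := by ring
    _ < (1 - (1 - α) * u ^ k) * (k * (1 - u)) := mul_lt_mul_of_pos_right hαu hscale

/-- Positivity of the denominator in the minimal-budget function `μ_h`. -/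
theorem stmt_7 (d Th αy : ℝ) (k : ℕ) (hk : 0 < k) (hd : 0 < d) (hTh : 0 < Th)
    (hαy : αy ∈ Set.Ioc (0 : ℝ) 1) :
    αy * (1 - Real.exp (-d * Th)) / (1 - (1 - αy) * Real.exp (-d * Th))
      * (Real.exp (-d * Th / k) / ((k : ℝ) * (1 - Real.exp (-d * Th / k)))) < 1 := by
  have hexp_pow : Real.exp (-d * Th) = Real.exp (-d * Th / k) ^ k := by
    rw [← Real.exp_nat_mul, mul_div_cancel₀ _ (Nat.cast_ne_zero.mpr hk.ne')]
  have hexp_lt_one : Real.exp (-d * Th / k) < 1 :=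
    Real.exp_lt_one_iff.mpr (div_neg_of_neg_of_pos (by nlinarith) (Nat.cast_pos.mpr hk))
  rw [hexp_pow]
  exact mul_one_sub_pow_div_mul_div_lt_one hk.ne' (Real.exp_pos _).le hexp_lt_one
    hαy.1.le hαy.2
end

section
/- Let a > 0. The function φ : (0,∞) → ℝ defined by φ(k) = e^{-a/k} / (k·(1-e^{-a/k})) is strictly increasing: for 0 < k_1 < k_2 one has φ(k_1) < φ(k_2). -/
/-!
Substituting `x = a / k` gives `φ(k) = 1 / (k (e^{a/k} - 1)) = 1 / (a · g(a/k))` with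
`g(x) = (e^x - 1) / x`, the slope of the secant of `exp` through `0` and `x`. By strict convexity
of `exp`, `g` is strictly increasing on `(0, ∞)`; as `k ↦ a / k` is strictly decreasing there,
`φ` is strictly increasing.
-/

open Real Set

lemma strictMonoOn_exp_sub_one_div : StrictMonoOn (fun x : ℝ => (exp x - 1) / x) (Ioi 0) := by
  intro x hx y hy hxy
  simpa [exp_zero] using
    strictConvexOn_exp.secant_strict_mono (mem_univ 0) (mem_univ x) (mem_univ y)
      (ne_of_gt hx) (ne_of_gt hy) hxy

lemma exp_sub_one_div_pos {x : ℝ} (hx : 0 < x) : 0 < (exp x - 1) / x :=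
  div_pos (sub_pos.2 (one_lt_exp_iff.2 hx)) hx

lemma exp_neg_div_one_sub_exp_neg (x : ℝ) : exp (-x) / (1 - exp (-x)) = (exp x - 1)⁻¹ := by
  rw [← mul_div_mul_right _ _ (exp_ne_zero x), sub_mul, ← exp_add, neg_add_cancel, exp_zero,
    one_mul, one_div]

lemma exp_neg_div_div_mul_one_sub_exp_neg {a k : ℝ} (ha : a ≠ 0) (hk : k ≠ 0) :
    exp (-a / k) / (k * (1 - exp (-a / k))) = (a * ((exp (a / k) - 1) / (a / k)))⁻¹ := by
  have hden : a * ((exp (a / k) - 1) / (a / k)) = k * (exp (a / k) - 1) := by field_simp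
  rw [hden, ← div_div, div_right_comm, neg_div, exp_neg_div_one_sub_exp_neg, mul_inv,
    div_eq_mul_inv, mul_comm]

/-- The function `φ(k) = e^{-a/k} / (k·(1 - e^{-a/k}))` is strictly increasing
on `(0, ∞)` for every `a > 0`. -/
theorem stmt_10 (a : ℝ) (ha : 0 < a) (k₁ k₂ : ℝ) (hk₁ : 0 < k₁) (hk : k₁ < k₂) :
    Real.exp (-a / k₁) / (k₁ * (1 - Real.exp (-a / k₁)))
      < Real.exp (-a / k₂) / (k₂ * (1 - Real.exp (-a / k₂))) := by
  have hk₂ : 0 < k₂ := hk₁.trans hk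
  have hx₁ : 0 < a / k₁ := div_pos ha hk₁
  have hx₂ : 0 < a / k₂ := div_pos ha hk₂
  rw [exp_neg_div_div_mul_one_sub_exp_neg ha.ne' hk₁.ne',
    exp_neg_div_div_mul_one_sub_exp_neg ha.ne' hk₂.ne']
  exact inv_strictAnti₀ (mul_pos ha (exp_sub_one_div_pos hx₂)) <| mul_lt_mul_of_pos_left
    (strictMonoOn_exp_sub_one_div hx₂ hx₁ (div_lt_div_of_pos_left ha hk₁ hk)) ha
end
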